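/- Let n ≥ 1 and let f: {0,1}^n → {0,1} be almost balanced, i.e. |Pr_x[f(x)=0] − Pr_x[f(x)=1]| ≤ 1/3 over uniformly random x. Then for every x ∈ {0,1}^n there exists an index i ∈ {1,...,n} such that Δ_i(x_1…x_{i−1}) ≥ 2/(3n). -/
import Mathlib


open Finset

/-- `π⁰(s)` for the prefix `s = x_1…x_k`: the fraction, among strings
`z ∈ {0,1}^n` having `x_1…x_k` as a prefix, of those with `f(z) = 0`. -/
noncomputable def piz {n : ℕ} (f : (Fin n → Bool) → Bool) (k : ℕ)
    (x : Fin n → Bool) : ℝ :=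
  ((Finset.univ.filter fun z : Fin n → Bool =>
      (∀ j : Fin n, (j : ℕ) < k → z j = x j) ∧ f z = false).card : ℝ) / 2 ^ (n - k)

/-- `Δ_i(x_1…x_{i-1}) = |π⁰(x_1…x_{i-1}0) - π⁰(x_1…x_{i-1}1)|` (the index `i`
is 0-based here, so the prefix consists of the coordinates `j < i`). -/
noncomputable def Del {n : ℕ} (f : (Fin n → Bool) → Bool) (i : Fin n)
    (x : Fin n → Bool) : ℝ :=
  |piz f ((i : ℕ) + 1) (Function.update x i false) -
    piz f ((i : ℕ) + 1) (Function.update x i true)|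

/-- `f` is almost balanced: `|Pr_x[f(x)=0] - Pr_x[f(x)=1]| ≤ 1/3` over
uniformly random `x ∈ {0,1}^n`. -/
def AlmostBalanced {n : ℕ} (f : (Fin n → Bool) → Bool) : Prop :=
  |((Finset.univ.filter fun x : Fin n → Bool => f x = false).card : ℝ) / 2 ^ n -
    ((Finset.univ.filter fun x : Fin n → Bool => f x = true).card : ℝ) / 2 ^ n| ≤ 1 / 3


-- condition rewrite
lemma piz_cond {n : ℕ} (f : (Fin n → Bool) → Bool) (k : ℕ) (hk : k < n)
    (x : Fin n → Bool) (b : Bool) (z : Fin n → Bool) :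
    ((∀ j : Fin n, (j : ℕ) < k + 1 → z j = Function.update x ⟨k, hk⟩ b j) ∧ f z = false)
      ↔ ((∀ j : Fin n, (j : ℕ) < k → z j = x j) ∧ f z = false) ∧ z ⟨k, hk⟩ = b := by
  constructor
  · rintro ⟨h1, h2⟩
    refine ⟨⟨fun j hj => ?_, h2⟩, ?_⟩
    · have hne : j ≠ ⟨k, hk⟩ := by
        intro h; subst h; exact absurd hj (lt_irrefl _)
      have := h1 j (Nat.lt_succ_of_lt hj)
      rwa [Function.update_of_ne hne] at this
    · have := h1 ⟨k, hk⟩ (Nat.lt_succ_self k)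
      rwa [Function.update_self] at this
  · rintro ⟨⟨h1, h2⟩, h3⟩
    refine ⟨fun j hj => ?_, h2⟩
    rcases Nat.lt_succ_iff_lt_or_eq.mp hj with h | h
    · have hne : j ≠ ⟨k, hk⟩ := by
        intro he; subst he; exact absurd h (lt_irrefl _)
      rw [Function.update_of_ne hne]; exact h1 j h
    · have : j = ⟨k, hk⟩ := Fin.ext h
      subst this; rw [Function.update_self]; exact h3

lemma piz_avg {n : ℕ} (f : (Fin n → Bool) → Bool) (k : ℕ) (hk : k < n)
    (x : Fin n → Bool) :
    piz f k x = (piz f (k + 1) (Function.update x ⟨k, hk⟩ false)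
      + piz f (k + 1) (Function.update x ⟨k, hk⟩ true)) / 2 := by
  have hsplit :
      (Finset.univ.filter fun z : Fin n → Bool =>
        (∀ j : Fin n, (j : ℕ) < k → z j = x j) ∧ f z = false).card =
      (Finset.univ.filter fun z : Fin n → Bool =>
        (∀ j : Fin n, (j : ℕ) < k + 1 → z j = Function.update x ⟨k, hk⟩ false j) ∧ f z = false).card
      + (Finset.univ.filter fun z : Fin n → Bool =>
        (∀ j : Fin n, (j : ℕ) < k + 1 → z j = Function.update x ⟨k, hk⟩ true j) ∧ f z = false).card := by
    have hdisj : Disjoint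
        (Finset.univ.filter fun z : Fin n → Bool =>
          (∀ j : Fin n, (j : ℕ) < k + 1 → z j = Function.update x ⟨k, hk⟩ false j) ∧ f z = false)
        (Finset.univ.filter fun z : Fin n → Bool =>
          (∀ j : Fin n, (j : ℕ) < k + 1 → z j = Function.update x ⟨k, hk⟩ true j) ∧ f z = false) := by
      rw [Finset.disjoint_left]
      intro z hz1 hz2
      rw [Finset.mem_filter, piz_cond f k hk x] at hz1 hz2
      rw [hz1.2.2] at hz2
      exact absurd hz2.2.2 (by simp)
    rw [← Finset.card_union_of_disjoint hdisj]
    congr 1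
    ext z
    simp only [Finset.mem_union, Finset.mem_filter, Finset.mem_univ, true_and,
      piz_cond f k hk x]
    constructor
    · intro h
      cases hb : z ⟨k, hk⟩
      · exact Or.inl ⟨h, rfl⟩
      · exact Or.inr ⟨h, rfl⟩
    · rintro (⟨h, _⟩ | ⟨h, _⟩) <;> exact h
  have hnk : n - k = (n - (k + 1)) + 1 := by clear hsplit; omega
  have hpow : (2 : ℝ) ^ (n - k) = 2 ^ (n - (k + 1)) * 2 := by
    rw [hnk, pow_succ]
  unfold piz
  rw [hsplit, hpow]
  push_cast
  have h2 : (0:ℝ) < 2 ^ (n - (k+1)) := by positivity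
  field_simp

lemma piz_succ_self {n : ℕ} (f : (Fin n → Bool) → Bool) (k : ℕ) (hk : k < n)
    (x : Fin n → Bool) :
    piz f (k + 1) x = piz f (k + 1) (Function.update x ⟨k, hk⟩ (x ⟨k, hk⟩)) := by
  rw [Function.update_eq_self]

lemma piz_step {n : ℕ} (f : (Fin n → Bool) → Bool) (k : ℕ) (hk : k < n)
    (x : Fin n → Bool) :
    |piz f (k + 1) x - piz f k x| ≤ Del f ⟨k, hk⟩ x / 2 := by
  rw [piz_avg f k hk x, piz_succ_self f k hk x]
  unfold Del
  set A := piz f (k + 1) (Function.update x ⟨k, hk⟩ false) with hA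
  set B := piz f (k + 1) (Function.update x ⟨k, hk⟩ true) with hB
  cases hb : x ⟨k, hk⟩
  · show |A - (A + B) / 2| ≤ |A - B| / 2
    rw [show A - (A + B) / 2 = (A - B) / 2 by ring, abs_div, abs_two]
  · show |B - (A + B) / 2| ≤ |A - B| / 2
    rw [show B - (A + B) / 2 = -((A - B) / 2) by ring, abs_neg, abs_div, abs_two]

lemma piz_zero {n : ℕ} (f : (Fin n → Bool) → Bool) (x : Fin n → Bool) :
    piz f 0 x = ((Finset.univ.filter fun z : Fin n → Bool => f z = false).card : ℝ) / 2 ^ n := by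
  unfold piz
  rw [Nat.sub_zero]
  have hfe : (Finset.univ.filter fun z : Fin n → Bool =>
      (∀ j : Fin n, (j : ℕ) < 0 → z j = x j) ∧ f z = false)
      = Finset.univ.filter fun z : Fin n → Bool => f z = false :=
    Finset.filter_congr (fun z _ => by simp)
  rw [hfe]

lemma piz_top {n : ℕ} (f : (Fin n → Bool) → Bool) (x : Fin n → Bool) :
    piz f n x = 0 ∨ piz f n x = 1 := by
  unfold piz
  have hset : (Finset.univ.filter fun z : Fin n → Bool =>
      (∀ j : Fin n, (j : ℕ) < n → z j = x j) ∧ f z = false) =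
      if f x = false then {x} else ∅ := by
    ext z
    simp only [Finset.mem_filter, Finset.mem_univ, true_and]
    constructor
    · rintro ⟨h1, h2⟩
      have hz : z = x := funext fun j => h1 j j.isLt
      subst hz
      simp [h2]
    · intro hz
      by_cases hfx : f x = false
      · simp [hfx] at hz
        subst hz
        exact ⟨fun j _ => rfl, hfx⟩
      · simp [hfx] at hz
  rw [hset, Nat.sub_self]
  by_cases hfx : f x = false <;> simp [hfx]


/-- If `n ≥ 1` and `f : {0,1}^n → {0,1}` is almost balanced, then for every
`x ∈ {0,1}^n` there is an index `i` with `Δ_i(x_1…x_{i-1}) ≥ 2/(3n)`. -/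
theorem pivotal_index_exists (n : ℕ) (hn : 1 ≤ n) (f : (Fin n → Bool) → Bool)
    (hf : AlmostBalanced f) (x : Fin n → Bool) :
    ∃ i : Fin n, Del f i x ≥ 2 / (3 * n) := by
  by_contra hcon
  push_neg at hcon
  -- almost balanced gives |piz f 0 x - 1/2| ≤ 1/6
  have hcard : ((Finset.univ.filter fun z : Fin n → Bool => f z = true).card : ℝ)
      = 2 ^ n - ((Finset.univ.filter fun z : Fin n → Bool => f z = false).card : ℝ) := by
    have := Finset.card_filter_add_card_filter_not
      (s := (Finset.univ : Finset (Fin n → Bool))) (p := fun z => f z = false)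
    have hcc : ((Finset.univ.filter fun z : Fin n → Bool => f z = false).card)
        + ((Finset.univ.filter fun z : Fin n → Bool => ¬ (f z = false)).card)
        = 2 ^ n := by
      simpa [Finset.card_univ] using this
    have heq : (Finset.univ.filter fun z : Fin n → Bool => ¬ (f z = false))
        = (Finset.univ.filter fun z : Fin n → Bool => f z = true) := by
      ext z; simp [Bool.not_eq_false]
    rw [heq] at hcc
    have := congrArg (Nat.cast (R := ℝ)) hcc
    push_cast at this
    linarith
  have hpos : (0:ℝ) < 2 ^ n := by positivity
  have h0 : |piz f 0 x - 1/2| ≤ 1/6 := by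
    rw [piz_zero]
    unfold AlmostBalanced at hf
    rw [hcard] at hf
    have hsub : ((2:ℝ) ^ n - ((Finset.univ.filter fun z : Fin n → Bool => f z = false).card : ℝ)) / 2 ^ n
        = 1 - ((Finset.univ.filter fun z : Fin n → Bool => f z = false).card : ℝ) / 2 ^ n := by
      field_simp
    rw [hsub] at hf
    rw [abs_le] at hf ⊢
    constructor <;> linarith [hf.1, hf.2]
  -- endpoints differ by at least 1/3
  have hend : (1:ℝ)/3 ≤ |piz f n x - piz f 0 x| := by
    have h0' := abs_le.mp h0
    rcases piz_top f x with h | h <;> rw [h]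
    · rw [le_abs]; right; linarith [h0'.1]
    · rw [le_abs]; left; linarith [h0'.2]
  -- each telescoping step is small
  have hnpos : (0:ℝ) < n := by exact_mod_cast hn
  have hstep : ∀ k ∈ Finset.range n,
      |piz f (k + 1) x - piz f k x| < 1 / (3 * n) := by
    intro k hk
    have hkn : k < n := Finset.mem_range.mp hk
    have h1 := piz_step f k hkn x
    have h2 := hcon ⟨k, hkn⟩
    have : Del f ⟨k, hkn⟩ x / 2 < (2 / (3 * n)) / 2 := by linarith
    calc |piz f (k + 1) x - piz f k x| ≤ Del f ⟨k, hkn⟩ x / 2 := h1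
      _ < (2 / (3 * n)) / 2 := this
      _ = 1 / (3 * n) := by ring
  have htel : piz f n x - piz f 0 x
      = ∑ k ∈ Finset.range n, (piz f (k + 1) x - piz f k x) :=
    (Finset.sum_range_sub (fun k => piz f k x) n).symm
  have hne : (Finset.range n).Nonempty := Finset.nonempty_range_iff.mpr (by omega)
  have hbound : |piz f n x - piz f 0 x| < 1/3 := by
    calc |piz f n x - piz f 0 x|
        = |∑ k ∈ Finset.range n, (piz f (k + 1) x - piz f k x)| := by rw [htel]
      _ ≤ ∑ k ∈ Finset.range n, |piz f (k + 1) x - piz f k x| :=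
          Finset.abs_sum_le_sum_abs _ _
      _ < ∑ k ∈ Finset.range n, 1 / (3 * (n:ℝ)) :=
          Finset.sum_lt_sum_of_nonempty hne hstep
      _ = n * (1 / (3 * (n:ℝ))) := by rw [Finset.sum_const, Finset.card_range, nsmul_eq_mul]
      _ = 1/3 := by field_simp
  linarith
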